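/- Let t, a > 1 and b be real numbers with b ≥ 2a. If t ≥ b + 2a·log(log(b) + 1), then t ≥ b + a·log(log(t) + 1). -/
import Mathlib

lemma log_le_sqrt' {t : ℝ} (ht : 0 < t) : Real.log t ≤ Real.sqrt t := by
  have hs : 0 < Real.sqrt t := Real.sqrt_pos.mpr ht
  have h1 : Real.log (Real.sqrt t / 2) ≤ Real.sqrt t / 2 - 1 :=
    Real.log_le_sub_one_of_pos (by positivity)
  have h2 : Real.log (Real.sqrt t / 2) = Real.log (Real.sqrt t) - Real.log 2 :=
    Real.log_div (ne_of_gt hs) two_ne_zero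
  have h3 : Real.log (Real.sqrt t) = Real.log t / 2 := Real.log_sqrt ht.le
  have h4 : Real.log 2 < 0.6931471808 := Real.log_two_lt_d9
  linarith

theorem stmt_5 (t a b : ℝ) (ht : 1 < t) (ha : 1 < a) (hb : 2 * a ≤ b)
    (h : b + 2 * a * Real.log (Real.log b + 1) ≤ t) :
    b + a * Real.log (Real.log t + 1) ≤ t := by
  have ha0 : 0 < a := by linarith
  have hb2 : 2 < b := by linarith
  have hlb : 0 < Real.log b := Real.log_pos (by linarith)
  have hlt : 0 < Real.log t := Real.log_pos ht
  by_cases hc : Real.log t + 1 ≤ (Real.log b + 1) ^ 2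
  · have h1 : Real.log (Real.log t + 1) ≤ Real.log ((Real.log b + 1) ^ 2) :=
      (Real.log_le_log_iff (by linarith) (by positivity)).mpr hc
    have h2 : Real.log ((Real.log b + 1) ^ 2) = 2 * Real.log (Real.log b + 1) := by
      rw [Real.log_pow]; push_cast; ring
    nlinarith
  · push_neg at hc
    have hbt : b ^ 2 < t := by
      have h1 : Real.log (b ^ 2) = 2 * Real.log b := by rw [Real.log_pow]; push_cast; ring
      have h2 : Real.log (b ^ 2) < Real.log t := by nlinarith
      exact (Real.log_lt_log_iff (by positivity) (by linarith)).mp h2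
    have hsq : b ≤ Real.sqrt t := by
      have h1 := Real.sqrt_le_sqrt hbt.le
      rwa [Real.sqrt_sq (by linarith : (0:ℝ) ≤ b)] at h1
    have hst : 2 ≤ Real.sqrt t := by linarith
    have htpos : 0 < t := by linarith
    have hsqt : Real.sqrt t ^ 2 = t := Real.sq_sqrt htpos.le
    have hlog1 : Real.log (Real.log t + 1) ≤ Real.log t := by
      have hx : Real.log t + 1 ≤ t := by
        have := Real.log_le_sub_one_of_pos htpos; linarith
      exact (Real.log_le_log_iff (by linarith) htpos).mpr hx
    have hlt2 : Real.log t ≤ Real.sqrt t := log_le_sqrt' htpos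
    have hL0 : 0 ≤ Real.log (Real.log t + 1) := Real.log_nonneg (by linarith)
    nlinarith [mul_nonneg (show (0:ℝ) ≤ Real.sqrt t / 2 - a by linarith)
        (show (0:ℝ) ≤ Real.sqrt t - Real.log (Real.log t + 1) by linarith)]
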